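/- Fix reals L > 1, L_0 < L, and y_0, y_1 with log(1 − 1/L) < y_0 < 0 < y_1. Set a_0 = (1/y_0)·( log(1 + L·(e^{y_0} − 1))/y_0 − L ). Let Y_1, …, Y_n be reals with y_0 ≤ Y_i ≤ y_1 for all i, not all zero, and set m_1 = (1/n)·Σ Y_i and m_2 = (1/n)·Σ Y_i² (so m_2 > 0). If m_1/m_2 ≥ −a_0/(L − L_0), then L_0·Σ_{i=1}^n Y_i ≤ Σ_{i=1}^n log(1 + L·(e^{Y_i} − 1)); that is, the log-return of the L-times daily leveraged index is at least L_0 times the log-return of the benchmark index. -/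

import Mathlib

/-!
Write `f x = log (1 + L (eˣ - 1))`. Since `f 0 = 0` and `f' 0 = L`, the quadratic `L x + a₀ x²`
touches `f` to first order at `0`, and `a₀` is chosen so that it also meets `f` at `y₀`. For
`L ≥ 1` one has `f''' ≥ 0`, so the derivative of `φ = f - L x - a₀ x²` is convex. By Rolle `φ'`
vanishes at some `c ∈ (y₀, 0)`; a convex function vanishing at `c` and `0` is `≤ 0` between them
and `≥ 0` outside, so `φ` increases, decreases, then increases, and is `≥ 0` on `[y₀, ∞)` since
`φ y₀ = φ 0 = 0`. Summing `f Yᵢ ≥ L Yᵢ + a₀ Yᵢ²` over the days, the hypothesis on `m₁ / m₂` says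
precisely that `a₀ ∑ Yᵢ² ≥ -(L - L₀) ∑ Yᵢ`.
-/

open Real Set

theorem nonneg_of_convexOn_deriv {φ φ' : ℝ → ℝ} {a b : ℝ} (hab : a < b)
    (hφ : ∀ x ∈ Ici a, HasDerivAt φ (φ' x) x) (hconv : ConvexOn ℝ (Ici a) φ')
    (ha : φ a = 0) (hb : φ b = 0) (hb' : φ' b = 0) {x : ℝ} (hx : a ≤ x) : 0 ≤ φ x := by
  have hcont : ∀ s ⊆ Ici a, ContinuousOn φ s := fun s hs y hy ↦
    (hφ y (hs hy)).continuousAt.continuousWithinAt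
  have hderiv : ∀ s ⊆ Ici a, ∀ y ∈ interior s, HasDerivWithinAt φ (φ' y) (interior s) y :=
    fun s hs y hy ↦ (hφ y (hs (interior_subset hy))).hasDerivWithinAt
  obtain ⟨c, ⟨hac, hcb⟩, hc⟩ := exists_hasDerivAt_eq_zero hab (hcont _ Icc_subset_Ici_self)
    (ha.trans hb.symm) fun y hy ↦ hφ y hy.1.le
  have hsub_left : Icc a c ⊆ Ici a := Icc_subset_Ici_self
  have hsub_mid : Icc c b ⊆ Ici a := Icc_subset_Ici_iff hcb.le |>.2 hac.le
  have hsub_right : Ici b ⊆ Ici a := Ici_subset_Ici.2 hab.le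
  have h_left : ∀ y ∈ interior (Icc a c), 0 ≤ φ' y := by
    rw [interior_Icc]
    rintro y ⟨hay, hyc⟩
    have := hconv.slope_mono_adjacent (mem_Ici.2 hay.le) (mem_Ici.2 hab.le) hyc hcb
    rw [hc, hb', div_le_div_iff₀ (sub_pos.2 hyc) (sub_pos.2 hcb)] at this
    nlinarith
  have h_mid : ∀ y ∈ interior (Icc c b), φ' y ≤ 0 := fun y hy ↦ by
    simpa [hc, hb'] using hconv.le_max_of_mem_Icc (mem_Ici.2 hac.le) (mem_Ici.2 hab.le)
      (interior_subset hy)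
  have h_right : ∀ y ∈ interior (Ici b), 0 ≤ φ' y := by
    rw [interior_Ici]
    intro y hby
    have := hconv.slope_mono_adjacent (mem_Ici.2 hac.le) (mem_Ici.2 (hab.trans hby).le) hcb hby
    rw [hc, hb', div_le_div_iff₀ (sub_pos.2 hcb) (sub_pos.2 hby)] at this
    nlinarith [sub_pos.2 hcb]
  rcases le_total x c with hxc | hcx
  · rw [← ha]
    exact monotoneOn_of_hasDerivWithinAt_nonneg (convex_Icc a c) (hcont _ hsub_left)
      (hderiv _ hsub_left) h_left ⟨le_rfl, hac.le⟩ ⟨hx, hxc⟩ hx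
  rcases le_total x b with hxb | hbx
  · rw [← hb]
    exact antitoneOn_of_hasDerivWithinAt_nonpos (convex_Icc c b) (hcont _ hsub_mid)
      (hderiv _ hsub_mid) h_mid ⟨hcx, hxb⟩ ⟨hcb.le, le_rfl⟩ hxb
  · rw [← hb]
    exact monotoneOn_of_hasDerivWithinAt_nonneg (convex_Ici b) (hcont _ hsub_right)
      (hderiv _ hsub_right) h_right self_mem_Ici hbx hbx

noncomputable def leveragedLogReturn (L x : ℝ) : ℝ := log (1 + L * (exp x - 1))

section
variable {L x : ℝ}

theorem one_add_mul_exp_sub_one_pos (hL : 1 < L) (hx : log (1 - 1 / L) < x) :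
    0 < 1 + L * (exp x - 1) := by
  have hL0 : 0 < L := by linarith
  have h1 : 0 < 1 - 1 / L := by rw [sub_pos, div_lt_one hL0]; exact hL
  have h2 : 1 - 1 / L < exp x := by rw [← exp_log h1]; exact exp_lt_exp.2 hx
  have h3 : L * (1 - 1 / L) = L - 1 := by field_simp
  nlinarith

theorem hasDerivAt_leveragedLogReturn (hx : 1 + L * (exp x - 1) ≠ 0) :
    HasDerivAt (leveragedLogReturn L) (L * exp x / (1 + L * (exp x - 1))) x := by
  have h := (((hasDerivAt_exp x).sub_const 1).const_mul L).const_add 1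
  unfold leveragedLogReturn
  simpa using h.log hx

theorem hasDerivAt_leveragedLogReturn_deriv (hx : 1 + L * (exp x - 1) ≠ 0) :
    HasDerivAt (fun y ↦ L * exp y / (1 + L * (exp y - 1)))
      (L * (1 - L) * exp x / (1 + L * (exp x - 1)) ^ 2) x := by
  have hP := (((hasDerivAt_exp x).sub_const 1).const_mul L).const_add 1
  exact (((hasDerivAt_exp x).const_mul L).div hP hx).congr_deriv (by ring)

theorem monotoneOn_leveragedLogReturn_second_deriv (hL : 1 ≤ L) :
    MonotoneOn (fun x ↦ L * (1 - L) * exp x / (1 + L * (exp x - 1)) ^ 2)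
      {x | 0 < 1 + L * (exp x - 1)} := by
  intro x hx y hy hxy
  simp only [mem_ofPred_eq] at hx hy ⊢
  have hexp : exp x ≤ exp y := exp_le_exp.2 hxy
  rw [div_le_div_iff₀ (by positivity) (by positivity)]
  -- with `u = exp x`, `v = exp y`, `k = L - 1`, this is `(v - u) (L u · L v - k²) ≥ 0`
  have hprod : (L - 1) ^ 2 ≤ L * exp x * (L * exp y) := by nlinarith
  nlinarith [mul_nonneg (sub_nonneg.2 hexp) (sub_nonneg.2 hprod),
    mul_nonneg (by linarith : 0 ≤ L) (by linarith : 0 ≤ L - 1)]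

end

theorem quadratic_le_leveragedLogReturn {L y0 a0 x : ℝ} (hL : 1 < L)
    (h0 : log (1 - 1 / L) < y0) (hy0 : y0 < 0)
    (ha0 : leveragedLogReturn L y0 = L * y0 + a0 * y0 ^ 2) (hx : y0 ≤ x) :
    L * x + a0 * x ^ 2 ≤ leveragedLogReturn L x := by
  have hP : ∀ y ∈ Ici y0, 0 < 1 + L * (exp y - 1) := fun y hy ↦
    (one_add_mul_exp_sub_one_pos hL h0).trans_le (by gcongr; exact hy)
  have hquad : ∀ y, HasDerivAt (fun y ↦ L * y + a0 * y ^ 2) (L + 2 * a0 * y) y := fun y ↦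
    (((hasDerivAt_id y).const_mul L).add ((hasDerivAt_pow 2 y).const_mul a0)).congr_deriv
      (by ring)
  have hlin : ∀ y, HasDerivAt (fun y ↦ L + 2 * a0 * y) (2 * a0) y := fun y ↦
    (((hasDerivAt_id y).const_mul (2 * a0)).const_add L).congr_deriv (by rw [mul_one])
  have hφ' : ∀ y ∈ Ici y0, HasDerivAt (fun y ↦ L * exp y / (1 + L * (exp y - 1)) - (L + 2 * a0 * y))
      (L * (1 - L) * exp y / (1 + L * (exp y - 1)) ^ 2 - 2 * a0) y := fun y hy ↦
    (hasDerivAt_leveragedLogReturn_deriv (hP y hy).ne').sub (hlin y)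
  have hconv : ConvexOn ℝ (Ici y0)
      (fun y ↦ L * exp y / (1 + L * (exp y - 1)) - (L + 2 * a0 * y)) := by
    refine MonotoneOn.convexOn_of_deriv (convex_Ici y0)
      (fun y hy ↦ (hφ' y hy).continuousAt.continuousWithinAt)
      (fun y hy ↦ (hφ' y (interior_subset hy)).differentiableAt.differentiableWithinAt) ?_
    rw [interior_Ici]
    intro y hy z hz hyz
    rw [(hφ' y (mem_Ici_of_Ioi hy)).deriv, (hφ' z (mem_Ici_of_Ioi hz)).deriv]
    exact sub_le_sub_right (monotoneOn_leveragedLogReturn_second_deriv hL.le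
      (hP y (mem_Ici_of_Ioi hy)) (hP z (mem_Ici_of_Ioi hz)) hyz) _
  have := nonneg_of_convexOn_deriv hy0
    (φ := fun y ↦ leveragedLogReturn L y - (L * y + a0 * y ^ 2))
    (fun y hy ↦ (hasDerivAt_leveragedLogReturn (hP y hy).ne').sub (hquad y)) hconv
    (by simp [ha0]) (by simp [leveragedLogReturn]) (by simp) hx
  simpa using this

theorem mul_sum_sq_le_sum_of_le_div {ι : Type*} (s : Finset ι) (Y : ι → ℝ) {c : ℝ}
    (h : c ≤ (∑ i ∈ s, Y i) / ∑ i ∈ s, Y i ^ 2) : c * ∑ i ∈ s, Y i ^ 2 ≤ ∑ i ∈ s, Y i := by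
  rcases (Finset.sum_nonneg fun i _ ↦ sq_nonneg (Y i)).eq_or_lt with h2 | h2
  · have hY : ∀ i ∈ s, Y i = 0 := fun i hi ↦
      pow_eq_zero_iff two_ne_zero |>.1 <|
        (Finset.sum_eq_zero_iff_of_nonneg fun i _ ↦ sq_nonneg (Y i)).1 h2.symm i hi
    rw [← h2, Finset.sum_eq_zero hY, mul_zero]
  · exact (le_div_iff₀ h2).1 h

theorem stmt_16_general (L L0 y0 y1 : ℝ) (hL : 1 < L) (hL0 : L0 < L)
    (h0 : Real.log (1 - 1 / L) < y0) (hy0 : y0 < 0)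
    (a0 : ℝ) (ha0 : a0 = (1 / y0) * (Real.log (1 + L * (Real.exp y0 - 1)) / y0 - L))
    (n : ℕ) (Y : Fin n → ℝ) (hY : ∀ i, y0 ≤ Y i ∧ Y i ≤ y1)
    (m1 m2 : ℝ)
    (hm1 : m1 = (1 / (n : ℝ)) * ∑ i, Y i)
    (hm2 : m2 = (1 / (n : ℝ)) * ∑ i, (Y i) ^ 2)
    (hth : -a0 / (L - L0) ≤ m1 / m2) :
    L0 * ∑ i, Y i ≤ ∑ i, Real.log (1 + L * (Real.exp (Y i) - 1)) := by
  have ha0' : leveragedLogReturn L y0 = L * y0 + a0 * y0 ^ 2 := by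
    rw [ha0, leveragedLogReturn]
    field_simp [hy0.ne]
    ring
  have hsum : ∑ i, (L * Y i + a0 * Y i ^ 2) ≤ ∑ i, leveragedLogReturn L (Y i) :=
    Finset.sum_le_sum fun i _ ↦ quadratic_le_leveragedLogReturn hL h0 hy0 ha0' (hY i).1
  rw [Finset.sum_add_distrib, ← Finset.mul_sum, ← Finset.mul_sum] at hsum
  have hmoment : -a0 / (L - L0) * ∑ i, Y i ^ 2 ≤ ∑ i, Y i := by
    refine mul_sum_sq_le_sum_of_le_div _ _ (hth.trans_eq ?_)
    rcases eq_or_ne n 0 with rfl | hn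
    · simp [hm1]
    · rw [hm1, hm2, mul_div_mul_left _ _ (by positivity)]
  rw [div_mul_eq_mul_div, div_le_iff₀ (sub_pos.2 hL0)] at hmoment
  change _ ≤ ∑ i, leveragedLogReturn L (Y i)
  linarith

theorem stmt_16 (L L0 y0 y1 : ℝ) (hL : 1 < L) (hL0 : L0 < L)
    (h0 : Real.log (1 - 1 / L) < y0) (hy0 : y0 < 0) (hy1 : 0 < y1)
    (a0 : ℝ) (ha0 : a0 = (1 / y0) * (Real.log (1 + L * (Real.exp y0 - 1)) / y0 - L))
    (n : ℕ) (Y : Fin n → ℝ) (hY : ∀ i, y0 ≤ Y i ∧ Y i ≤ y1)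
    (hne : ∃ i, Y i ≠ 0)
    (m1 m2 : ℝ)
    (hm1 : m1 = (1 / (n : ℝ)) * ∑ i, Y i)
    (hm2 : m2 = (1 / (n : ℝ)) * ∑ i, (Y i) ^ 2)
    (hth : -a0 / (L - L0) ≤ m1 / m2) :
    L0 * ∑ i, Y i ≤ ∑ i, Real.log (1 + L * (Real.exp (Y i) - 1)) :=
  stmt_16_general L L0 y0 y1 hL hL0 h0 hy0 a0 ha0 n Y hY m1 m2 hm1 hm2 hth
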